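/- Let k ≥ 1, N = 2k, and suppose |c_i| = 1 for all i. Define L0(n) = M₊ for n even, M₋ for n odd, and L1(n) = M₋ for n even, M₊ for n odd. Suppose the sequence (Y_n) in ℂ^N satisfies Y_{n+2} = L0(n) Y_n + L1(n) Y_{n+1} for all n ≥ 0, with Y_0 = 0 and Y_1 = B. Then the solution is eventually constant: Y_n = (D₊ + M₋) B for every n > 2. -/

import Mathlib

/-- `M₊` sends `e_{N−i+1} ↦ c_i e_i` for `1 ≤ i ≤ k` and `e_j ↦ 0` for
`1 ≤ j ≤ k` (here `N = 2k`; matrix with respect to the standard basis,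
0-indexed). -/
noncomputable def Mplus (k : ℕ) (c : Fin k → ℂ) :
    Matrix (Fin (2 * k)) (Fin (2 * k)) ℂ := fun a b =>
  if h : (a : ℕ) < k ∧ (a : ℕ) + (b : ℕ) = 2 * k - 1 then c ⟨a, h.1⟩ else 0

/-- `M₋ = M₊†` sends `e_i ↦ conj(c_i) e_{N−i+1}` for `1 ≤ i ≤ k` and
`e_j ↦ 0` for `k < j ≤ N`. -/
noncomputable def Mminus (k : ℕ) (c : Fin k → ℂ) :
    Matrix (Fin (2 * k)) (Fin (2 * k)) ℂ := fun a b =>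
  if h : (b : ℕ) < k ∧ (a : ℕ) + (b : ℕ) = 2 * k - 1 then
    starRingEnd ℂ (c ⟨b, h.1⟩) else 0

/-- `D₊` sends `e_i ↦ |c_i|² e_i` for `1 ≤ i ≤ k` and `e_j ↦ 0` for
`k < j ≤ N`. -/
noncomputable def Dplus (k : ℕ) (c : Fin k → ℂ) :
    Matrix (Fin (2 * k)) (Fin (2 * k)) ℂ := fun a b =>
  if h : a = b ∧ (a : ℕ) < k then ((‖c ⟨a, h.2⟩‖) ^ 2 : ℂ) else 0

/-- `D₋` sends `e_j ↦ |c_{N−j+1}|² e_j` for `k < j ≤ N` and `e_i ↦ 0` for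
`1 ≤ i ≤ k`. -/
noncomputable def Dminus (k : ℕ) (c : Fin k → ℂ) :
    Matrix (Fin (2 * k)) (Fin (2 * k)) ℂ := fun a b =>
  if h : a = b ∧ k ≤ (a : ℕ) then
    ((‖c ⟨2 * k - 1 - (a : ℕ), by have := a.isLt; omega⟩‖) ^ 2 : ℂ)
  else 0

/-- `L0(n) = M₊` for `n` even, `M₋` for `n` odd. -/
noncomputable def Lzero (k : ℕ) (c : Fin k → ℂ) (n : ℕ) :
    Matrix (Fin (2 * k)) (Fin (2 * k)) ℂ :=
  if Even n then Mplus k c else Mminus k c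

/-- `L1(n) = M₋` for `n` even, `M₊` for `n` odd. -/
noncomputable def Lone (k : ℕ) (c : Fin k → ℂ) (n : ℕ) :
    Matrix (Fin (2 * k)) (Fin (2 * k)) ℂ :=
  if Even n then Mminus k c else Mplus k c

/-!
Write `P = M₊` and `Q = M₋ = P†`. Both are supported on the antidiagonal, i.e. `(P v)_a` and
`(Q v)_a` only involve `v_{rev a}`, and `P` lives on the first half of the rows while `Q` lives
on the second half. This gives `P Q = D₊`, `Q² = 0`, `P D₊ = 0`, and, because `|c_i| = 1`,
`Q D₊ = Q`. Hence `Y₂ = Q B` and `Y₃ = Y₄ = (D₊ + Q) B`. Since `L0(n) + L1(n) = P + Q` for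
every `n` and `(P + Q)(D₊ + Q) = D₊ + Q`, the vector `(D₊ + Q) B` is a fixed point of the
recurrence, so two consecutive terms equal to it force all later terms to equal it.
-/

open Matrix

section Recurrence

variable {V : Type*} (F : ℕ → V → V → V) (Y : ℕ → V) (v : V)

theorem eq_of_two_step_recurrence_of_fixed (hY : ∀ n, Y (n + 2) = F n (Y n) (Y (n + 1)))
    (hF : ∀ n, F n v v = v) (m : ℕ) (hm : Y m = v) (hm' : Y (m + 1) = v) :
    ∀ n, m ≤ n → Y n = v := by
  have key : ∀ n, m ≤ n → Y n = v ∧ Y (n + 1) = v := by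
    intro n hn
    induction n, hn using Nat.le_induction with
    | base => exact ⟨hm, hm'⟩
    | succ n _ ih => exact ⟨ih.2, by rw [hY, ih.1, ih.2, hF]⟩
  exact fun n hn => (key n hn).1

end Recurrence

section Reflection

variable {k : ℕ} (c : Fin k → ℂ) (v : Fin (2 * k) → ℂ) (a : Fin (2 * k))

theorem Fin.val_add_val_eq_iff_eq_rev {n : ℕ} (a b : Fin n) :
    (a : ℕ) + b = n - 1 ↔ b = a.rev := by
  rw [Fin.ext_iff, Fin.val_rev]; omega

theorem Fin.val_rev_lt_iff {a : Fin (2 * k)} : (a.rev : ℕ) < k ↔ k ≤ a := by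
  rw [Fin.val_rev]; omega

theorem mulVec_Mplus_apply :
    (Mplus k c *ᵥ v) a = if h : (a : ℕ) < k then c ⟨a, h⟩ * v a.rev else 0 := by
  simp only [mulVec, dotProduct, Mplus, Fin.val_add_val_eq_iff_eq_rev]
  split_ifs with h <;> simp [h]

theorem mulVec_Mminus_apply :
    (Mminus k c *ᵥ v) a =
      if h : (a.rev : ℕ) < k then starRingEnd ℂ (c ⟨a.rev, h⟩) * v a.rev else 0 := by
  simp only [mulVec, dotProduct, Mminus, Fin.val_add_val_eq_iff_eq_rev]
  rw [Finset.sum_eq_single a.rev (fun b _ hb => by simp [hb]) (by simp)]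
  simp only [and_true, dite_mul, zero_mul]

theorem mulVec_Dplus_apply :
    (Dplus k c *ᵥ v) a = if h : (a : ℕ) < k then (‖c ⟨a, h⟩‖ ^ 2 : ℂ) * v a else 0 := by
  simp only [mulVec, dotProduct, Dplus]
  split_ifs with h <;> simp [h]

end Reflection

section Identities

variable {k : ℕ} (c : Fin k → ℂ)

theorem Mplus_mul_Mminus : Mplus k c * Mminus k c = Dplus k c := by
  refine ext_iff_mulVec.2 fun v => funext fun a => ?_
  rw [← mulVec_mulVec, mulVec_Mplus_apply, mulVec_Mminus_apply, mulVec_Dplus_apply]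
  simp only [Fin.rev_rev]
  split_ifs <;> simp [← mul_assoc, Complex.mul_conj']

theorem Mminus_mul_Mminus : Mminus k c * Mminus k c = 0 := by
  refine ext_iff_mulVec.2 fun v => funext fun a => ?_
  rw [← mulVec_mulVec, mulVec_Mminus_apply, mulVec_Mminus_apply, zero_mulVec]
  simp only [Fin.rev_rev]
  split_ifs with hra ha
  · rw [Fin.val_rev_lt_iff] at hra; omega
  all_goals simp

theorem Mplus_mul_Dplus : Mplus k c * Dplus k c = 0 := by
  refine ext_iff_mulVec.2 fun v => funext fun a => ?_
  rw [← mulVec_mulVec, mulVec_Mplus_apply, mulVec_Dplus_apply, zero_mulVec]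
  split_ifs with ha hra
  · rw [Fin.val_rev_lt_iff] at hra; omega
  all_goals simp

theorem Mminus_mul_Dplus (hc : ∀ i, ‖c i‖ = 1) : Mminus k c * Dplus k c = Mminus k c := by
  refine ext_iff_mulVec.2 fun v => funext fun a => ?_
  rw [← mulVec_mulVec, mulVec_Mminus_apply, mulVec_Dplus_apply, mulVec_Mminus_apply]
  split_ifs <;> simp [hc]

theorem Mplus_add_Mminus_mul_Dplus_add_Mminus (hc : ∀ i, ‖c i‖ = 1) :
    (Mplus k c + Mminus k c) * (Dplus k c + Mminus k c) = Dplus k c + Mminus k c := by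
  rw [add_mul, mul_add, mul_add, Mplus_mul_Dplus, Mplus_mul_Mminus, Mminus_mul_Dplus c hc,
    Mminus_mul_Mminus, zero_add, add_zero]

theorem Lzero_add_Lone (n : ℕ) : Lzero k c n + Lone k c n = Mplus k c + Mminus k c := by
  unfold Lzero Lone
  split_ifs
  · rfl
  · exact add_comm _ _

end Identities

theorem cauchy_problem_I_constant_solution_general (k : ℕ)
    (c : Fin k → ℂ) (hc : ∀ i, ‖c i‖ = 1)
    (Y : ℕ → (Fin (2 * k) → ℂ)) (B : Fin (2 * k) → ℂ)
    (hrec : ∀ n : ℕ, Y (n + 2)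
      = (Lzero k c n).mulVec (Y n) + (Lone k c n).mulVec (Y (n + 1)))
    (h0 : Y 0 = 0) (h1 : Y 1 = B) :
    ∀ n : ℕ, 2 < n → Y n = (Dplus k c + Mminus k c).mulVec B := by
  have h2 : Y 2 = Mminus k c *ᵥ B := by simpa [Lzero, Lone, h0, h1] using hrec 0
  have h3 : Y 3 = (Dplus k c + Mminus k c) *ᵥ B := by
    rw [hrec 1, h1, h2, mulVec_mulVec]
    simp [Lzero, Lone, Mplus_mul_Mminus, add_mulVec, add_comm]
  have h4 : Y 4 = (Dplus k c + Mminus k c) *ᵥ B := by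
    rw [hrec 2, h2, h3, mulVec_mulVec, mulVec_mulVec]
    simp [Lzero, Lone, Mplus_mul_Mminus, mul_add, Mminus_mul_Dplus c hc, Mminus_mul_Mminus,
      add_mulVec]
  refine eq_of_two_step_recurrence_of_fixed (fun n x y => Lzero k c n *ᵥ x + Lone k c n *ᵥ y)
    Y _ hrec (fun n => ?_) 3 h3 h4
  rw [mulVec_mulVec, mulVec_mulVec, ← add_mulVec, ← add_mul, Lzero_add_Lone,
    Mplus_add_Mminus_mul_Dplus_add_Mminus c hc]

/-- If `|c_i| = 1` for all `i`, the solution of the Cauchy problem (I) is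
eventually constant: `Y_n = (D₊ + M₋) B` for every `n > 2`. -/
theorem cauchy_problem_I_constant_solution (k : ℕ) (hk : 1 ≤ k)
    (c : Fin k → ℂ) (hc : ∀ i, ‖c i‖ = 1)
    (Y : ℕ → (Fin (2 * k) → ℂ)) (B : Fin (2 * k) → ℂ)
    (hrec : ∀ n : ℕ, Y (n + 2)
      = (Lzero k c n).mulVec (Y n) + (Lone k c n).mulVec (Y (n + 1)))
    (h0 : Y 0 = 0) (h1 : Y 1 = B) :
    ∀ n : ℕ, 2 < n → Y n = (Dplus k c + Mminus k c).mulVec B :=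
  cauchy_problem_I_constant_solution_general k c hc Y B hrec h0 h1
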